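/- arXiv:1202.3651 — 3 statements merged into one kernel-verified Lean document; each statement's English description precedes it below -/
import Mathlib

section
/- Let N ≥ 1 and 1 ≤ k < N be integers, and let r_1,…,r_N be distinct real numbers. Consider the set V of families z : {1,…,N}^k → ℝ satisfying: (i) for every (j_2,…,j_k) ∈ {1,…,N}^{k−1} and every integer 0 ≤ m ≤ N−k−1, Σ_{j_1=1}^{N} z(j_1, j_2, …, j_k) · r_{j_1}^m = 0; and (ii) for every permutation σ ∈ S_k and every (j_1,…,j_k) ∈ {1,…,N}^k, z(j_{σ(1)},…,j_{σ(k)}) = sgn(σ) · z(j_1,…,j_k). Then V is a real vector subspace of dimension at most 1; equivalently, any two elements of V are linearly dependent (the solutions are determined up to a global multiplicative constant). -/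
/-!
Solutions form a subspace, so it suffices that a solution `z` vanishing at one injective
tuple `v₀` vanishes identically. Antisymmetry kills every tuple with a repeated entry and
transports the moment condition from the first slot to every slot. If `z` vanishes at an
injective tuple `v`, then `j ↦ z (v with slot i replaced by j)` vanishes at the `k` entries
of `v`, so it is supported on at most `N - k` points, and its `N - k` vanishing moments force
it to be zero (pair it with a Lagrange basis polynomial). Every injective tuple is reached
from `v₀` by such one-slot changes followed by a permutation of the slots.
-/

open Function Finset Equiv Polynomial

section Vandermonde

variable {α K : Type*} [Fintype α] [Field K] {r : α → K} {x : α → K} {d : ℕ}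

theorem sum_mul_eval_eq_zero_of_sum_mul_pow_eq_zero (hx : ∀ m < d, ∑ j, x j * r j ^ m = 0)
    {p : K[X]} (hp : p.natDegree < d) : ∑ j, x j * p.eval (r j) = 0 := by
  simp_rw [eval_eq_sum_range' hp, mul_sum]
  rw [sum_comm]
  refine sum_eq_zero fun m hm => ?_
  calc ∑ j, x j * (p.coeff m * r j ^ m) = p.coeff m * ∑ j, x j * r j ^ m := by
        rw [mul_sum]; exact sum_congr rfl fun j _ => by ring
    _ = 0 := by rw [hx m (mem_range.1 hm), mul_zero]

theorem eq_zero_of_sum_mul_pow_eq_zero [DecidableEq α] (hr : Injective r) {s : Finset α}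
    (hs : #s ≤ d) (hxs : ∀ j ∉ s, x j = 0) (hx : ∀ m < d, ∑ j, x j * r j ^ m = 0) :
    x = 0 := by
  funext j₀
  by_cases hj₀ : j₀ ∉ s
  · exact hxs j₀ hj₀
  rw [not_not] at hj₀
  have hinj : Set.InjOn r s := hr.injOn
  calc x j₀ = ∑ j, x j * (Lagrange.basis s r j₀).eval (r j) := by
        rw [sum_eq_single j₀ _ (by simp), Lagrange.eval_basis_self hinj hj₀, mul_one]
        intro j _ hj
        by_cases hjs : j ∈ s
        · rw [Lagrange.eval_basis_of_ne (Ne.symm hj) hjs, mul_zero]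
        · rw [hxs j hjs, zero_mul]
    _ = 0 := sum_mul_eval_eq_zero_of_sum_mul_pow_eq_zero hx <| by
        rw [Lagrange.natDegree_basis hinj hj₀]
        have := card_pos.2 ⟨j₀, hj₀⟩
        omega

end Vandermonde

section InjectiveTuples

variable {ι α : Type*} {v w : ι → α}

theorem Function.Injective.range_eq_of_range_subset [Finite ι] (hv : Injective v)
    (hw : Injective w) (h : Set.range v ⊆ Set.range w) : Set.range v = Set.range w :=
  Set.eq_of_subset_of_ncard_le h
    (by rw [Set.ncard_range_of_injective hv, Set.ncard_range_of_injective hw])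
    (Set.finite_range w)

theorem Function.Injective.exists_perm_eq_comp (hv : Injective v) (hw : Injective w)
    (h : Set.range v = Set.range w) : ∃ σ : Perm ι, v = w ∘ σ :=
  ⟨(ofInjective v hv).trans ((setCongr h).trans (ofInjective w hw).symm), funext fun i => by
    simp [apply_ofInjective_symm]⟩

theorem Function.Injective.update_of_notMem_range [DecidableEq ι] (hv : Injective v) {a : α}
    (ha : a ∉ Set.range v) (i : ι) : Injective (update v i a) := by
  intro s t hst
  simp only [update_apply] at hst
  split_ifs at hst with hs ht ht
  · exact hs.trans ht.symm
  · exact absurd ⟨t, hst.symm⟩ ha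
  · exact absurd ⟨s, hst⟩ ha
  · exact hv hst

theorem Function.Injective.induction_on_update [Finite ι] [DecidableEq ι]
    {P : (ι → α) → Prop} {v₀ : ι → α} (hv₀ : Injective v₀) (h₀ : P v₀)
    (hperm : ∀ v (σ : Perm ι), P v → P (v ∘ σ))
    (hupdate : ∀ v i a, Injective v → P v → P (update v i a)) (hv : Injective v) : P v := by
  generalize hn : {i | v i ∉ Set.range v₀}.ncard = n
  induction n generalizing v with
  | zero =>
    have hsub : Set.range v ⊆ Set.range v₀ := by
      rintro _ ⟨i, rfl⟩
      by_contra hi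
      have : {i | v i ∉ Set.range v₀} = ∅ := (Set.ncard_eq_zero (Set.toFinite _)).1 hn
      exact this.subset hi
    obtain ⟨σ, rfl⟩ := hv.exists_perm_eq_comp hv₀ (hv.range_eq_of_range_subset hv₀ hsub)
    exact hperm v₀ σ h₀
  | succ n ih =>
    obtain ⟨i, hi⟩ : {i | v i ∉ Set.range v₀}.Nonempty :=
      (Set.ncard_pos (Set.toFinite _)).1 (by omega)
    obtain ⟨_, ⟨t, rfl⟩, ht⟩ : (Set.range v₀ \ Set.range v).Nonempty := by
      rw [Set.sdiff_nonempty]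
      intro hsub
      exact hi (hv₀.range_eq_of_range_subset hv hsub ▸ ⟨i, rfl⟩)
    have hw := hv.update_of_notMem_range ht i
    have hPw : P (update v i (v₀ t)) := by
      refine ih hw ?_
      have : {s | update v i (v₀ t) s ∉ Set.range v₀} =
          {s | v s ∉ Set.range v₀} \ {i} := by
        ext s
        rcases eq_or_ne s i with rfl | hs
        · simp
        · simp [hs]
      rw [this, Set.ncard_sdiff_singleton_of_mem hi, hn, Nat.add_sub_cancel]
    simpa using hupdate _ i (v i) hw hPw

end InjectiveTuples

section Antisymmetric

variable {ι α R : Type*} [Fintype ι] [DecidableEq ι]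

def IsAntisymmetric [Ring R] (z : (ι → α) → R) : Prop :=
  ∀ (σ : Perm ι) (v : ι → α), z (v ∘ σ) = ((Perm.sign σ : ℤ) : R) * z v

theorem IsAntisymmetric.apply_eq_zero_of_not_injective [Ring R] [IsAddTorsionFree R]
    {z : (ι → α) → R} (hz : IsAntisymmetric z) {v : ι → α} (hv : ¬Injective v) :
    z v = 0 := by
  obtain ⟨s, t, hst, hne⟩ : ∃ s t, v s = v t ∧ s ≠ t := by simpa [Injective] using hv
  have hswap : v ∘ swap s t = v := by
    funext u
    rcases eq_or_ne u s with rfl | hus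
    · simp [hst]
    rcases eq_or_ne u t with rfl | hut
    · simp [hst]
    · simp [swap_apply_of_ne_of_ne hus hut]
  have := hz (swap s t) v
  rw [hswap, Perm.sign_swap hne] at this
  exact self_eq_neg.1 (by simpa using this)

variable [Fintype α] [CommRing R]

def HasVanishingMoments (r : α → R) (d : ℕ) (i : ι) (z : (ι → α) → R) : Prop :=
  ∀ (v : ι → α), ∀ m < d, ∑ j, z (update v i j) * r j ^ m = 0

theorem IsAntisymmetric.hasVanishingMoments {r : α → R} {d : ℕ} {i₀ : ι}
    {z : (ι → α) → R} (hz : IsAntisymmetric z) (h : HasVanishingMoments r d i₀ z) (i : ι) :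
    HasVanishingMoments r d i z := by
  intro v m hm
  set σ := swap i₀ i
  have hupdate : ∀ j, update v i j = update (v ∘ σ) i₀ j ∘ σ := fun j => by
    rw [update_comp_equiv, comp_assoc]
    simp [σ, ← Perm.coe_mul]
  calc ∑ j, z (update v i j) * r j ^ m
      = (Perm.sign σ : ℤ) * ∑ j, z (update (v ∘ σ) i₀ j) * r j ^ m := by
        rw [mul_sum]
        exact sum_congr rfl fun j _ => by rw [hupdate, hz]; ring
    _ = 0 := by rw [h _ m hm, mul_zero]

variable (r : α → R) (d : ℕ) (i₀ : ι) in
def antisymmetricMomentSpace : Submodule R ((ι → α) → R) where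
  carrier := {z | HasVanishingMoments r d i₀ z ∧ IsAntisymmetric z}
  zero_mem' := ⟨fun v m hm => by simp, fun σ v => by simp⟩
  add_mem' := by
    rintro z w ⟨hzm, hza⟩ ⟨hwm, hwa⟩
    refine ⟨fun v m hm => ?_, fun σ v => ?_⟩
    · simp [add_mul, sum_add_distrib, hzm v m hm, hwm v m hm]
    · simp [hza σ v, hwa σ v, mul_add]
  smul_mem' := by
    rintro c z ⟨hzm, hza⟩
    refine ⟨fun v m hm => ?_, fun σ v => ?_⟩
    · simp [mul_assoc, ← mul_sum, hzm v m hm]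
    · simp [hza σ v, mul_left_comm]

end Antisymmetric

section MomentSpace

variable {ι α K : Type*} [Fintype ι] [DecidableEq ι] [Fintype α] [DecidableEq α] [Field K]
  [CharZero K] {r : α → K} {d : ℕ} {i₀ : ι} {z : (ι → α) → K}

theorem IsAntisymmetric.apply_update_eq_zero (hr : Injective r)
    (hd : Fintype.card α - Fintype.card ι ≤ d) (hz : IsAntisymmetric z)
    (hmom : HasVanishingMoments r d i₀ z) {v : ι → α} (hv : Injective v) (hzv : z v = 0)
    (i : ι) (a : α) : z (update v i a) = 0 := by
  -- as a function of the new entry, `z` vanishes on the `card ι` values taken by `v`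
  refine congrFun (eq_zero_of_sum_mul_pow_eq_zero (x := fun j => z (update v i j)) hr
    (s := (univ.image v)ᶜ) ?_ ?_ (hz.hasVanishingMoments hmom i v)) a
  · rwa [card_compl, card_image_of_injective _ hv, card_univ]
  · intro j hj
    obtain ⟨t, -, rfl⟩ := mem_image.1 (not_not.1 (mem_compl.not.1 hj))
    rcases eq_or_ne t i with rfl | hti
    · simpa using hzv
    · refine hz.apply_eq_zero_of_not_injective fun hinj => hti (hinj ?_)
      simp [update_of_ne hti]

theorem IsAntisymmetric.eq_zero_of_apply_eq_zero (hr : Injective r)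
    (hd : Fintype.card α - Fintype.card ι ≤ d) (hz : IsAntisymmetric z)
    (hmom : HasVanishingMoments r d i₀ z) {v₀ : ι → α} (hv₀ : Injective v₀) (h₀ : z v₀ = 0) :
    z = 0 := by
  funext v
  by_cases hv : Injective v
  · exact hv₀.induction_on_update (P := fun v => z v = 0) h₀
      (fun v σ h => by simp [hz σ v, h])
      (fun v i a hv h => hz.apply_update_eq_zero hr hd hmom hv h i a) hv
  · exact hz.apply_eq_zero_of_not_injective hv

end MomentSpace

theorem Submodule.exists_smul_add_smul_eq_zero {K M : Type*} [Field K] [AddCommGroup M]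
    [Module K M] {S : Submodule K M} (φ : M →ₗ[K] K) (hφ : ∀ x ∈ S, φ x = 0 → x = 0)
    {x y : M} (hx : x ∈ S) (hy : y ∈ S) : ∃ a b : K, (a ≠ 0 ∨ b ≠ 0) ∧ a • x + b • y = 0 := by
  by_cases h : φ x = 0
  · exact ⟨1, 0, Or.inl one_ne_zero, by simp [hφ x hx h]⟩
  · refine ⟨φ y, -φ x, Or.inr (neg_ne_zero.2 h), hφ _ ?_ ?_⟩
    · exact S.add_mem (S.smul_mem _ hx) (S.smul_mem _ hy)
    · simp [mul_comm]

theorem linear_system_rank_one_general (N k : ℕ) (hk1 : 1 ≤ k) (hk2 : k < N)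
    (r : Fin N → ℝ) (hr : Function.Injective r)
    (z₁ z₂ : (Fin k → Fin N) → ℝ)
    (h₁mom : ∀ (v : Fin k → Fin N) (m : ℕ), m < N - k →
      ∑ j1 : Fin N, z₁ (Function.update v ⟨0, hk1⟩ j1) * r j1 ^ m = 0)
    (h₁anti : ∀ (σ : Equiv.Perm (Fin k)) (v : Fin k → Fin N),
      z₁ (v ∘ σ) = ((Equiv.Perm.sign σ : ℤ) : ℝ) * z₁ v)
    (h₂mom : ∀ (v : Fin k → Fin N) (m : ℕ), m < N - k →
      ∑ j1 : Fin N, z₂ (Function.update v ⟨0, hk1⟩ j1) * r j1 ^ m = 0)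
    (h₂anti : ∀ (σ : Equiv.Perm (Fin k)) (v : Fin k → Fin N),
      z₂ (v ∘ σ) = ((Equiv.Perm.sign σ : ℤ) : ℝ) * z₂ v) :
    ∃ a b : ℝ, (a ≠ 0 ∨ b ≠ 0) ∧ ∀ v : Fin k → Fin N, a * z₁ v + b * z₂ v = 0 := by
  let v₀ : Fin k → Fin N := Fin.castLE hk2.le
  have hd : Fintype.card (Fin N) - Fintype.card (Fin k) ≤ N - k := by simp
  obtain ⟨a, b, hab, h⟩ := Submodule.exists_smul_add_smul_eq_zero
    (S := antisymmetricMomentSpace r (N - k) ⟨0, hk1⟩) (LinearMap.proj v₀)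
    (fun _ ⟨hmom, hz⟩ => hz.eq_zero_of_apply_eq_zero hr hd hmom (Fin.castLE_injective _))
    ⟨h₁mom, h₁anti⟩ ⟨h₂mom, h₂anti⟩
  exact ⟨a, b, hab, fun v => congrFun h v⟩

/-- **Lemma (Ayyer–Romik).** Let `N ≥ 1`, `1 ≤ k < N`, and let `r_1,…,r_N` be
distinct reals. Any two families `z : {1,…,N}^k → ℝ` satisfying
(i) `Σ_{j₁} z(j₁,j₂,…,j_k) r_{j₁}^m = 0` for all `(j₂,…,j_k)` and `0 ≤ m ≤ N−k−1`, and
(ii) antisymmetry under permutations of the indices,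
are linearly dependent (the solutions are determined up to a global constant). -/
theorem linear_system_rank_one (N k : ℕ) (hN : 1 ≤ N) (hk1 : 1 ≤ k) (hk2 : k < N)
    (r : Fin N → ℝ) (hr : Function.Injective r)
    (z₁ z₂ : (Fin k → Fin N) → ℝ)
    (h₁mom : ∀ (v : Fin k → Fin N) (m : ℕ), m < N - k →
      ∑ j1 : Fin N, z₁ (Function.update v ⟨0, hk1⟩ j1) * r j1 ^ m = 0)
    (h₁anti : ∀ (σ : Equiv.Perm (Fin k)) (v : Fin k → Fin N),
      z₁ (v ∘ σ) = ((Equiv.Perm.sign σ : ℤ) : ℝ) * z₁ v)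
    (h₂mom : ∀ (v : Fin k → Fin N) (m : ℕ), m < N - k →
      ∑ j1 : Fin N, z₂ (Function.update v ⟨0, hk1⟩ j1) * r j1 ^ m = 0)
    (h₂anti : ∀ (σ : Equiv.Perm (Fin k)) (v : Fin k → Fin N),
      z₂ (v ∘ σ) = ((Equiv.Perm.sign σ : ℤ) : ℝ) * z₂ v) :
    ∃ a b : ℝ, (a ≠ 0 ∨ b ≠ 0) ∧ ∀ v : Fin k → Fin N, a * z₁ v + b * z₂ v = 0 :=
  linear_system_rank_one_general N k hk1 hk2 r hr z₁ z₂ h₁mom h₁anti h₂mom h₂anti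
end

section
/- Let n ≥ 1. Define rational numbers c_{n,m,k} for integers m ≥ 0 and k by c_{n,0,k} = A_{n,k}, and for m ≥ 1 by the recurrence c_{n,m,k} = (1/2)·( −2k·c_{n,m−1,k+1} + (n+4k−2m−2)·c_{n,m−1,k} + (5n−4k+2m+2)·c_{n,m−1,k−1} − 2(n−k+m+1)·c_{n,m−1,k−2} ). Then for every integer 0 ≤ m ≤ 2n−1 and every real u: f_n^{(m)}(u) = sin^{2n−1−m}(u) · Σ_{k=1}^{n+m} c_{n,m,k} · a(u)^{k−1} · b(u)^{n−k+m}. -/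
open Finset

/-- `M` is an alternating sign matrix: entries in `{-1,0,1}`, every row and column
sums to `1`, and the nonzero entries alternate in sign (equivalently, all prefix
sums of rows and columns lie in `{0,1}`). -/
def IsASM {n : ℕ} (M : Matrix (Fin n) (Fin n) ℤ) : Prop :=
  (∀ i j, M i j = -1 ∨ M i j = 0 ∨ M i j = 1) ∧
  (∀ i j : Fin n, (∑ k ∈ Finset.univ.filter (fun k => k ≤ j), M i k) = 0 ∨
                  (∑ k ∈ Finset.univ.filter (fun k => k ≤ j), M i k) = 1) ∧
  (∀ i : Fin n, (∑ k, M i k) = 1) ∧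
  (∀ j i : Fin n, (∑ k ∈ Finset.univ.filter (fun k => k ≤ i), M k j) = 0 ∨
                  (∑ k ∈ Finset.univ.filter (fun k => k ≤ i), M k j) = 1) ∧
  (∀ j : Fin n, (∑ k, M k j) = 1)

/-- `M` has a `1` entry at (1-indexed) row `r`, column `c`. -/
def HasOneAt {n : ℕ} (M : Matrix (Fin n) (Fin n) ℤ) (r c : ℤ) : Prop :=
  ∃ p q : Fin n, (p : ℤ) + 1 = r ∧ (q : ℤ) + 1 = c ∧ M p q = 1

/-- `A_n`: the total number of ASMs of order `n`. -/
noncomputable def Atot (n : ℕ) : ℕ :=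
  Set.ncard {M : Matrix (Fin n) (Fin n) ℤ | IsASM M}

/-- `A_{n,k}`: the number of ASMs of order `n` with a `1` at position `(1,k)`
(and `0` when `k < 1` or `k > n`). -/
noncomputable def Ank (n : ℕ) (k : ℤ) : ℕ :=
  Set.ncard {M : Matrix (Fin n) (Fin n) ℤ | IsASM M ∧ HasOneAt M 1 k}

/-- `A_n^{TL}(i,j)`: number of ASMs of order `n` with `m_{1,i} = m_{j,1} = 1`. -/
noncomputable def ATL (n i j : ℕ) : ℕ :=
  Set.ncard {M : Matrix (Fin n) (Fin n) ℤ |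
    IsASM M ∧ HasOneAt M 1 (i : ℤ) ∧ HasOneAt M (j : ℤ) 1}

/-- `A_n^{TLB}(i,j,k)`: number of ASMs of order `n` with `m_{1,i} = m_{j,1} = m_{n,k} = 1`. -/
noncomputable def ATLB (n i j k : ℕ) : ℕ :=
  Set.ncard {M : Matrix (Fin n) (Fin n) ℤ |
    IsASM M ∧ HasOneAt M 1 (i : ℤ) ∧ HasOneAt M (j : ℤ) 1 ∧ HasOneAt M (n : ℤ) (k : ℤ)}

/-- `A_n^{TLBR}(i,j,k,ℓ)`: number of ASMs of order `n` with
`m_{1,i} = m_{j,1} = m_{n,k} = m_{ℓ,n} = 1`. -/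
noncomputable def ATLBR (n i j k l : ℕ) : ℕ :=
  Set.ncard {M : Matrix (Fin n) (Fin n) ℤ |
    IsASM M ∧ HasOneAt M 1 (i : ℤ) ∧ HasOneAt M (j : ℤ) 1 ∧
      HasOneAt M (n : ℤ) (k : ℤ) ∧ HasOneAt M (l : ℤ) (n : ℤ)}

/-- `α_n(t) = Σ_{k=1}^n A_{n,k} t^{k-1}`. -/
noncomputable def alphaP (n : ℕ) (t : ℝ) : ℝ :=
  ∑ k ∈ Finset.Icc 1 n, (Ank n (k : ℤ) : ℝ) * t ^ (k - 1)

/-- `β_n(t) = Σ_{k=1}^{n-1} A_{n-1,k} t^k`. -/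
noncomputable def betaP (n : ℕ) (t : ℝ) : ℝ :=
  ∑ k ∈ Finset.Icc 1 (n - 1), (Ank (n - 1) (k : ℤ) : ℝ) * t ^ k

/-- The coefficient `g_{n,k}` appearing in `γ_n`. -/
noncomputable def gcoef (n : ℕ) (k : ℤ) : ℝ :=
  -2 * ((n : ℝ) - (k : ℝ) + 3) * (Ank (n - 1) (k - 3) : ℝ)
  + (5 * (n : ℝ) - 4 * (k : ℝ) + 6) * (Ank (n - 1) (k - 2) : ℝ)
  + ((n : ℝ) + 4 * (k : ℝ) - 6) * (Ank (n - 1) (k - 1) : ℝ)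
  - 2 * (k : ℝ) * (Ank (n - 1) k : ℝ)

/-- `γ_n(t) = Σ_{k=1}^{n+2} g_{n,k} t^{k-1}`. -/
noncomputable def gammaP (n : ℕ) (t : ℝ) : ℝ :=
  ∑ k ∈ Finset.Icc 1 (n + 2), gcoef n (k : ℤ) * t ^ (k - 1)

/-- The coefficient `d_{n,k}` appearing in `δ_n`. -/
noncomputable def dcoef (n : ℕ) (k : ℤ) : ℝ :=
  4 * ((n : ℝ) + 4 - (k : ℝ)) * ((n : ℝ) + 5 - (k : ℝ)) * (Ank (n - 1) (k - 5) : ℝ)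
  - 4 * ((n : ℝ) + 4 - (k : ℝ)) * (5 * (n : ℝ) + 11 - 4 * (k : ℝ)) * (Ank (n - 1) (k - 4) : ℝ)
  + (240 - 172 * (k : ℝ) + 32 * (k : ℝ) ^ 2 + 120 * (n : ℝ) - 52 * (k : ℝ) * (n : ℝ)
      + 21 * (n : ℝ) ^ 2) * (Ank (n - 1) (k - 3) : ℝ)
  - 2 * (80 - 80 * (k : ℝ) + 20 * (k : ℝ) ^ 2 + 42 * (n : ℝ) - 20 * (k : ℝ) * (n : ℝ)
      - 5 * (n : ℝ) ^ 2) * (Ank (n - 1) (k - 2) : ℝ)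
  + (64 - 84 * (k : ℝ) + 32 * (k : ℝ) ^ 2 - 4 * (n : ℝ) - 12 * (k : ℝ) * (n : ℝ)
      + (n : ℝ) ^ 2) * (Ank (n - 1) (k - 1) : ℝ)
  - 4 * (k : ℝ) * ((n : ℝ) - 5 + 4 * (k : ℝ)) * (Ank (n - 1) k : ℝ)
  + 4 * (k : ℝ) * ((k : ℝ) + 1) * (Ank (n - 1) (k + 1) : ℝ)

/-- `δ_n(t) = Σ_{k=1}^{n+3} d_{n,k} t^{k-1}`. -/
noncomputable def deltaP (n : ℕ) (t : ℝ) : ℝ :=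
  ∑ k ∈ Finset.Icc 1 (n + 3), dcoef n (k : ℤ) * t ^ (k - 1)

/-- `ρ_n = (1/(8 A_n² (2n−2))) ((n−2)!(3n−2)!/((2n−3)!(2n−1)!))²`. -/
noncomputable def rhoC (n : ℕ) : ℝ :=
  1 / (8 * (Atot n : ℝ) ^ 2 * (2 * (n : ℝ) - 2)) *
    ((Nat.factorial (n - 2) : ℝ) * (Nat.factorial (3 * n - 2) : ℝ) /
      ((Nat.factorial (2 * n - 3) : ℝ) * (Nat.factorial (2 * n - 1) : ℝ))) ^ 2

/-- `σ_n = (1/(64 A_n³ (2n−2)²(2n−3))) ((n−2)!(3n−2)!/((2n−3)!(2n−1)!))³`. -/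
noncomputable def sigmaC (n : ℕ) : ℝ :=
  1 / (64 * (Atot n : ℝ) ^ 3 * (2 * (n : ℝ) - 2) ^ 2 * (2 * (n : ℝ) - 3)) *
    ((Nat.factorial (n - 2) : ℝ) * (Nat.factorial (3 * n - 2) : ℝ) /
      ((Nat.factorial (2 * n - 3) : ℝ) * (Nat.factorial (2 * n - 1) : ℝ))) ^ 3

/-- `a(u) = (2/√3) sin(π/3 + u)`. -/
noncomputable def aw (u : ℝ) : ℝ := 2 / Real.sqrt 3 * Real.sin (Real.pi / 3 + u)

/-- `b(u) = (2/√3) sin(π/3 - u)`. -/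
noncomputable def bw (u : ℝ) : ℝ := 2 / Real.sqrt 3 * Real.sin (Real.pi / 3 - u)

/-- The weight `w(M)` of an ASM `M` with row spectral parameters `x` and column
spectral parameters `y`, at the combinatorial point `η = 2π/3`. -/
noncomputable def wtASM {n : ℕ} (M : Matrix (Fin n) (Fin n) ℤ) (x y : Fin n → ℝ) : ℝ :=
  ∏ i : Fin n, ∏ j : Fin n,
    if M i j ≠ 0 then 1
    else if (∑ k ∈ Finset.univ.filter (fun k => k < j), M i k)
            = (∑ k ∈ Finset.univ.filter (fun k => k < i), M k j)
      then aw (x i - y j) else bw (x i - y j)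

/-- The square ice (six-vertex) partition function with domain wall boundary
conditions at `η = 2π/3`, as a sum over ASMs of order `n`. -/
noncomputable def Zfn (n : ℕ) (x y : Fin n → ℝ) : ℝ :=
  ∑ᶠ M ∈ {M : Matrix (Fin n) (Fin n) ℤ | IsASM M}, wtASM M x y

/-- `f_n(u) = sin^{2n-1}(u) Σ_{k=1}^n A_{n,k} a(u)^{k-1} b(u)^{n-k}`. -/
noncomputable def fASM (n : ℕ) (u : ℝ) : ℝ :=
  Real.sin u ^ (2 * n - 1) *
    ∑ k ∈ Finset.Icc 1 n, (Ank n (k : ℤ) : ℝ) * aw u ^ (k - 1) * bw u ^ (n - k)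

/-- Generalized binomial coefficient `C(x,m) = x(x-1)⋯(x-m+1)/m!`. -/
noncomputable def genBinom (x : ℝ) (m : ℕ) : ℝ :=
  (∏ i ∈ Finset.range m, (x - (i : ℝ))) / (Nat.factorial m : ℝ)

/-- The coefficients `c_{n,m,k}`: `c_{n,0,k} = A_{n,k}`, and for `m ≥ 1`,
`c_{n,m,k} = ½(−2k c_{n,m−1,k+1} + (n+4k−2m−2) c_{n,m−1,k}
  + (5n−4k+2m+2) c_{n,m−1,k−1} − 2(n−k+m+1) c_{n,m−1,k−2})`. -/
noncomputable def ccoef (n : ℕ) : ℕ → ℤ → ℝ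
  | 0, k => (Ank n k : ℝ)
  | m + 1, k =>
      (1 / 2) * (-2 * (k : ℝ) * ccoef n m (k + 1)
        + ((n : ℝ) + 4 * (k : ℝ) - 2 * ((m : ℝ) + 1) - 2) * ccoef n m k
        + (5 * (n : ℝ) - 4 * (k : ℝ) + 2 * ((m : ℝ) + 1) + 2) * ccoef n m (k - 1)
        - 2 * ((n : ℝ) - (k : ℝ) + ((m : ℝ) + 1) + 1) * ccoef n m (k - 2))


/-!
Write `s = sin u`, `a = a(u)`, `b = b(u)`. Then `s = (√3/2)(a - b)`, `cos u = (a + b)/2`,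
`√3 a' = 2b - a` and `√3 b' = b - 2a`. So if `F = s^p H(a, b)` with `H` a binary form of
degree `N - 1`, then `F' = s^(p-1) G(a, b)` with
`G = p (a + b)/2 · H + (a - b)(2b - a)/2 · ∂_a H + (a - b)(b - 2a)/2 · ∂_b H`,
a binary form of degree `N` whose coefficient of `a^(k-1) b^(N-k)` is a combination of the
coefficients `c_{k+1}, c_k, c_{k-1}, c_{k-2}` of `H`. For `p = 2n - 1 - m` and `N = n + m` this is
the recurrence defining `c_{n,m+1,k}`, and the theorem follows by induction on `m`; the bound
`m ≤ 2n - 1` keeps the exponent of `s` from being truncated.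
-/

def binaryForm (N : ℕ) (c : ℤ → ℝ) (a b : ℝ) : ℝ :=
  ∑ i ∈ range N, c (i + 1) * a ^ i * b ^ (N - 1 - i)

namespace binaryForm

variable {N : ℕ} {c : ℤ → ℝ} {a b : ℝ}

lemma eq_sum_Icc : binaryForm N c a b = ∑ k ∈ Icc 1 N, c k * a ^ (k - 1) * b ^ (N - k) := by
  rw [← Ico_add_one_right_eq_Icc, sum_Ico_eq_sum_range, Nat.add_sub_cancel, binaryForm]
  refine sum_congr rfl fun i _ => ?_
  simp [Nat.sub_sub, add_comm 1 i]

lemma succ (hc : c (N + 1) = 0) : binaryForm (N + 1) c a b = b * binaryForm N c a b := by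
  unfold binaryForm
  rw [sum_range_succ, mul_sum]
  push_cast
  rw [hc, zero_mul, zero_mul, add_zero]
  refine sum_congr rfl fun i hi => ?_
  rw [mem_range] at hi
  rw [show N - i = N - 1 - i + 1 by omega, pow_succ]
  ring

lemma succ_shift (hc : c 0 = 0) :
    binaryForm (N + 1) (fun k => c (k - 1)) a b = a * binaryForm N c a b := by
  unfold binaryForm
  rw [sum_range_succ', mul_sum]
  simp only [Nat.cast_add, Nat.cast_one, add_sub_cancel_right, Nat.cast_zero, zero_add,
    sub_self, hc, zero_mul, add_zero]
  refine sum_congr rfl fun i _ => ?_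
  rw [show N + 1 - 1 - (i + 1) = N - 1 - i by omega, pow_succ]
  ring

lemma add_eq_pow_mul (hc : ∀ k, (N : ℤ) < k → c k = 0) (j : ℕ) :
    binaryForm (N + j) c a b = b ^ j * binaryForm N c a b := by
  induction j with
  | zero => simp
  | succ j ih => rw [← add_assoc, succ (hc _ (by push_cast; omega)), ih]; ring

lemma add_shift_eq_pow_mul (hc : ∀ k, k < 1 → c k = 0) (j : ℕ) :
    binaryForm (N + j) (fun k => c (k - j)) a b = a ^ j * binaryForm N c a b := by
  induction j with
  | zero => simp
  | succ j ih =>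
    have hshift : (fun k : ℤ => c (k - (j + 1 : ℕ))) = fun k => (fun k => c (k - j)) (k - 1) := by
      funext k; push_cast; ring_nf
    rw [← add_assoc, hshift]
    calc _ = a * binaryForm (N + j) (fun k => c (k - j)) a b := succ_shift (hc _ (by omega))
      _ = _ := by rw [ih]; ring

lemma monomial_mul (hc : ∀ k, k < 1 ∨ (N : ℤ) < k → c k = 0) (i j : ℕ) :
    a ^ i * b ^ j * binaryForm N c a b = binaryForm (N + j + i) (fun k => c (k - i)) a b := by
  rw [add_shift_eq_pow_mul (N := N + j) (c := c) (fun k hk => hc _ (by omega)) i,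
    add_eq_pow_mul (fun k hk => hc _ (by omega))]
  ring

end binaryForm

lemma hasDerivAt_binaryForm {A B : ℝ → ℝ} {A' B' u : ℝ} (hA : HasDerivAt A A' u)
    (hB : HasDerivAt B B' u) (M : ℕ) (c : ℤ → ℝ) :
    HasDerivAt (fun v => binaryForm (M + 1) c (A v) (B v))
      (A' * binaryForm M (fun k => k * c (k + 1)) (A u) (B u)
        + B' * binaryForm M (fun k => (M + 1 - k) * c k) (A u) (B u)) u := by
  simp only [binaryForm, Nat.add_sub_cancel]
  have hterm : ∀ i ∈ range (M + 1), HasDerivAt (fun v => c (i + 1) * A v ^ i * B v ^ (M - i))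
      (c (i + 1) * (i * A u ^ (i - 1) * A') * B u ^ (M - i)
        + c (i + 1) * A u ^ i * ((M - i : ℕ) * B u ^ (M - i - 1) * B')) u :=
    fun i _ => ((hA.pow i).const_mul (c (i + 1))).mul (hB.pow (M - i))
  refine (HasDerivAt.fun_sum hterm).congr_deriv ?_
  rw [sum_add_distrib, sum_range_succ', sum_range_succ, mul_sum, mul_sum]
  simp only [Nat.cast_zero, zero_mul, mul_zero, Nat.sub_self, add_zero]
  congr 1 <;> refine sum_congr rfl fun i hi => ?_
  · rw [Nat.add_sub_cancel, Nat.sub_sub, add_comm 1 i]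
    push_cast
    ring
  · rw [mem_range] at hi
    rw [Nat.cast_sub hi.le, Nat.sub_right_comm]
    push_cast
    ring

noncomputable def derivCoeff (p : ℝ) (N : ℕ) (c : ℤ → ℝ) (k : ℤ) : ℝ :=
  -k * c (k + 1) + (p + 4 * k - N - 3) / 2 * c k + (p + 3 * N - 4 * k + 5) / 2 * c (k - 1)
    - (N - k + 2) * c (k - 2)

lemma binaryForm_derivCoeff {M : ℕ} {c : ℤ → ℝ} (hc : ∀ k, k < 1 ∨ (M + 1 : ℤ) < k → c k = 0)
    (p a b : ℝ) :
    binaryForm (M + 2) (derivCoeff p (M + 1) c) a b =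
      p * ((a + b) / 2) * binaryForm (M + 1) c a b
        + (a - b) * (2 * b - a) / 2 * binaryForm M (fun k => k * c (k + 1)) a b
        + (a - b) * (b - 2 * a) / 2 * binaryForm M (fun k => (M + 1 - k) * c k) a b := by
  set da : ℤ → ℝ := fun k => k * c (k + 1)
  set db : ℤ → ℝ := fun k => (M + 1 - k) * c k
  have hc' : ∀ k, k < 1 ∨ ((M + 1 : ℕ) : ℤ) < k → c k = 0 := by push_cast; exact hc
  have hda : ∀ k, k < 1 ∨ (M : ℤ) < k → da k = 0 := by
    intro k hk
    rcases eq_or_ne k 0 with rfl | hk0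
    · simp [da]
    · simp only [da]; rw [hc _ (by omega), mul_zero]
  have hdb : ∀ k, k < 1 ∨ (M : ℤ) < k → db k = 0 := by
    intro k hk
    rcases eq_or_ne k (M + 1) with rfl | hk0
    · simp [db]
    · simp only [db]; rw [hc _ (by omega), mul_zero]
  rw [show p * ((a + b) / 2) * binaryForm (M + 1) c a b
        + (a - b) * (2 * b - a) / 2 * binaryForm M da a b
        + (a - b) * (b - 2 * a) / 2 * binaryForm M db a b
      = p / 2 * (a ^ 1 * b ^ 0 * binaryForm (M + 1) c a b)
        + p / 2 * (a ^ 0 * b ^ 1 * binaryForm (M + 1) c a b)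
        - 1 / 2 * (a ^ 2 * b ^ 0 * binaryForm M da a b)
        + 3 / 2 * (a ^ 1 * b ^ 1 * binaryForm M da a b)
        - (a ^ 0 * b ^ 2 * binaryForm M da a b)
        - (a ^ 2 * b ^ 0 * binaryForm M db a b)
        + 3 / 2 * (a ^ 1 * b ^ 1 * binaryForm M db a b)
        - 1 / 2 * (a ^ 0 * b ^ 2 * binaryForm M db a b) by ring]
  simp only [binaryForm.monomial_mul hc', binaryForm.monomial_mul hda,
    binaryForm.monomial_mul hdb, add_zero, add_assoc, Nat.reduceAdd]
  simp only [binaryForm, mul_sum, ← sum_add_distrib, ← sum_sub_distrib]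
  refine sum_congr rfl fun i _ => ?_
  simp only [derivCoeff, da, db]
  push_cast
  ring_nf

open Real

lemma sin_eq_aw_sub_bw (u : ℝ) : sin u = √3 / 2 * (aw u - bw u) := by
  simp only [aw, bw, sin_add, sin_sub, sin_pi_div_three, cos_pi_div_three]
  field_simp
  ring

lemma cos_eq_aw_add_bw (u : ℝ) : cos u = (aw u + bw u) / 2 := by
  simp only [aw, bw, sin_add, sin_sub, sin_pi_div_three, cos_pi_div_three]
  field_simp
  ring

lemma hasDerivAt_aw (u : ℝ) : HasDerivAt aw ((2 * bw u - aw u) / √3) u := by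
  have h := (((hasDerivAt_id u).const_add (π / 3)).sin).const_mul (2 / √3)
  refine h.congr_deriv ?_
  have h3 : √3 ^ 2 = 3 := sq_sqrt (by norm_num)
  simp only [aw, bw, id, cos_add, sin_add, sin_sub, sin_pi_div_three, cos_pi_div_three]
  field_simp
  linear_combination (-sin u) * h3

lemma hasDerivAt_bw (u : ℝ) : HasDerivAt bw ((bw u - 2 * aw u) / √3) u := by
  have h := (((hasDerivAt_id u).const_sub (π / 3)).sin).const_mul (2 / √3)
  refine h.congr_deriv ?_
  have h3 : √3 ^ 2 = 3 := sq_sqrt (by norm_num)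
  simp only [aw, bw, id, cos_sub, sin_add, sin_sub, sin_pi_div_three, cos_pi_div_three]
  field_simp
  linear_combination (-sin u) * h3

lemma hasDerivAt_sin_pow_mul_binaryForm {q M : ℕ} {c : ℤ → ℝ}
    (hc : ∀ k, k < 1 ∨ (M + 1 : ℤ) < k → c k = 0) (u : ℝ) :
    HasDerivAt (fun v => sin v ^ (q + 1) * binaryForm (M + 1) c (aw v) (bw v))
      (sin u ^ q * binaryForm (M + 2) (derivCoeff (q + 1) (M + 1) c) (aw u) (bw u)) u := by
  have h := ((hasDerivAt_sin u).pow (q + 1)).mul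
    (hasDerivAt_binaryForm (hasDerivAt_aw u) (hasDerivAt_bw u) M c)
  refine h.congr_deriv ?_
  have hsa : sin u * ((2 * bw u - aw u) / √3) = (aw u - bw u) * (2 * bw u - aw u) / 2 := by
    rw [sin_eq_aw_sub_bw]; field_simp
  have hsb : sin u * ((bw u - 2 * aw u) / √3) = (aw u - bw u) * (bw u - 2 * aw u) / 2 := by
    rw [sin_eq_aw_sub_bw]; field_simp
  rw [Pi.pow_apply, binaryForm_derivCoeff hc, cos_eq_aw_add_bw, Nat.add_sub_cancel, pow_succ]
  push_cast
  linear_combination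
    (sin u ^ q * binaryForm M (fun k => k * c (k + 1)) (aw u) (bw u)) * hsa
      + (sin u ^ q * binaryForm M (fun k => (M + 1 - k) * c k) (aw u) (bw u)) * hsb

lemma Ank_eq_zero {n : ℕ} {k : ℤ} (hk : k < 1 ∨ (n : ℤ) < k) : Ank n k = 0 := by
  have hempty : {M : Matrix (Fin n) (Fin n) ℤ | IsASM M ∧ HasOneAt M 1 k} = ∅ := by
    ext M
    simp only [Set.mem_ofPred_eq, Set.mem_empty_iff_false, iff_false]
    rintro ⟨-, p, q, -, hq, -⟩
    have := q.isLt
    omega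
  rw [Ank, hempty, Set.ncard_empty]

lemma ccoef_eq_zero (n m : ℕ) {k : ℤ} (hk : k < 1 ∨ (n + m : ℤ) < k) : ccoef n m k = 0 := by
  induction m generalizing k with
  | zero => simp [ccoef, Ank_eq_zero (n := n) (by simpa using hk)]
  | succ m ih =>
    push_cast at hk
    have hk1 : (k : ℝ) * ccoef n m (k + 1) = 0 := by
      rcases eq_or_ne k 0 with rfl | hk0
      · simp
      · rw [ih (by omega), mul_zero]
    have hk2 : ((n : ℝ) - k + (m + 1) + 1) * ccoef n m (k - 2) = 0 := by
      rcases eq_or_ne k (n + m + 2) with rfl | hk0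
      · push_cast; ring
      · rw [ih (by omega), mul_zero]
    rw [ccoef, ih (k := k) (by omega), ih (k := k - 1) (by omega)]
    linear_combination -hk1 - hk2

lemma ccoef_succ (n m : ℕ) : ccoef n (m + 1) = derivCoeff (2 * n - 1 - m) (n + m) (ccoef n m) := by
  funext k
  simp only [ccoef, derivCoeff]
  push_cast
  ring

theorem fn_derivative_expansion_general (n : ℕ) (m : ℕ) (hm : m ≤ 2 * n - 1)
    (u : ℝ) :
    iteratedDeriv m (fASM n) u =
      Real.sin u ^ (2 * n - 1 - m) *
        ∑ k ∈ Finset.Icc 1 (n + m),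
          ccoef n m (k : ℤ) * aw u ^ (k - 1) * bw u ^ (n + m - k) := by
  induction m generalizing u with
  | zero => simp [fASM, ccoef]
  | succ m ih =>
    obtain ⟨q, hq⟩ : ∃ q, 2 * n - 1 - m = q + 1 := ⟨2 * n - 2 - m, by omega⟩
    obtain ⟨M, hM⟩ : ∃ M, n + m = M + 1 := ⟨n + m - 1, by omega⟩
    have hp : (q : ℝ) + 1 = 2 * n - 1 - m := by
      rw [← Nat.cast_add_one, ← hq, Nat.cast_sub (by omega), Nat.cast_sub (by omega)]
      push_cast
      ring
    have hf : iteratedDeriv m (fASM n) =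
        fun v => sin v ^ (q + 1) * binaryForm (M + 1) (ccoef n m) (aw v) (bw v) := by
      funext v
      rw [ih (by omega), binaryForm.eq_sum_Icc, hq, hM]
    have hc : ∀ k, k < 1 ∨ (M + 1 : ℤ) < k → ccoef n m k = 0 := fun k hk =>
      ccoef_eq_zero n m (by omega)
    rw [iteratedDeriv_succ, hf, (hasDerivAt_sin_pow_mul_binaryForm hc u).deriv,
      ← binaryForm.eq_sum_Icc, ccoef_succ, ← hp, hM, show 2 * n - 1 - (m + 1) = q by omega,
      show n + (m + 1) = M + 2 by omega]

/-- **Proposition (Ayyer–Romik).** For `0 ≤ m ≤ 2n−1` and real `u`: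
`f_n^{(m)}(u) = sin^{2n−1−m}(u) Σ_{k=1}^{n+m} c_{n,m,k} a(u)^{k−1} b(u)^{n−k+m}`. -/
theorem fn_derivative_expansion (n : ℕ) (hn : 1 ≤ n) (m : ℕ) (hm : m ≤ 2 * n - 1)
    (u : ℝ) :
    iteratedDeriv m (fASM n) u =
      Real.sin u ^ (2 * n - 1 - m) *
        ∑ k ∈ Finset.Icc 1 (n + m),
          ccoef n m (k : ℤ) * aw u ^ (k - 1) * bw u ^ (n + m - k) :=
  fn_derivative_expansion_general n m hm u
end

section
/- Let n ≥ 1 and let u be real. Then the partition function with a single nonzero spectral parameter attached to the first row satisfies the first-row expansion: Z_n(u, 0, …, 0; 0, …, 0) = Σ_{k=1}^{n} A_{n,k} · a(u)^{k−1} · b(u)^{n−k}, where x_1 = u and all other row and column parameters are 0. -/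
open Finset

/-!
Every row below the first carries the spectral parameter `0`, and `a(0) = b(0) = 1`, so only the
first row contributes to `w(M)`. The first row of an ASM is a unit vector `e_k`: to the left of
its `1` the row prefix sum `0` equals the (empty) column sum above, giving `a(u)`, and to the
right the prefix sum is `1`, giving `b(u)`. Hence `w(M) = a(u)^(k-1) b(u)^(n-k)`, and grouping
the ASMs by `k` yields the expansion.
-/

lemma aw_zero : aw 0 = 1 := by
  rw [aw, add_zero, Real.sin_pi_div_three]
  field_simp

lemma bw_zero : bw 0 = 1 := by
  rw [bw, sub_zero, Real.sin_pi_div_three]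
  field_simp

lemma finite_setOf_isASM (n : ℕ) : {M : Matrix (Fin n) (Fin n) ℤ | IsASM M}.Finite := by
  refine (Set.Finite.pi fun _ => Set.Finite.pi fun _ =>
    Set.toFinite ({-1, 0, 1} : Set ℤ)).subset fun M hM => ?_
  simpa [Set.mem_pi] using hM.1

lemma Fin.prod_ite_lt_ite_eq {m : ℕ} {R : Type*} [CommMonoid R] (q : Fin (m + 1)) (a b : R) :
    ∏ j : Fin (m + 1), (if j < q then a else if j = q then 1 else b)
      = a ^ (q : ℕ) * b ^ (m - q) := by
  have hsplit : ∀ j, (if j < q then a else if j = q then 1 else b)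
      = (if j < q then a else 1) * (if q < j then b else 1) := fun j => by
    rcases lt_trichotomy j q with h | rfl | h
    · simp [h, h.not_gt]
    · simp
    · simp [h, h.not_gt, h.ne']
  simp only [hsplit, Finset.prod_mul_distrib, Finset.prod_ite, Finset.prod_const, one_pow, mul_one]
  rw [Finset.filter_gt_eq_Iio, Finset.filter_lt_eq_Ioi, Fin.card_Iio, Fin.card_Ioi]
  simp

lemma Fin.sum_univ_add_one_eq_sum_Icc {M : Type*} [AddCommMonoid M] (m : ℕ) (f : ℕ → M) :
    ∑ q : Fin (m + 1), f (q + 1) = ∑ k ∈ Finset.Icc 1 (m + 1), f k := by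
  rw [Fin.sum_univ_eq_sum_range (fun i => f (i + 1)), Finset.range_eq_Ico, Finset.sum_Ico_add',
    Finset.Ico_add_one_right_eq_Icc]

lemma wtASM_of_row_zero_eq_single {m : ℕ} {M : Matrix (Fin (m + 1)) (Fin (m + 1)) ℤ}
    {q : Fin (m + 1)} (hq : M 0 = Pi.single q 1) (u : ℝ) :
    wtASM M (fun i => if (i : ℕ) = 0 then u else 0) (fun _ => 0)
      = aw u ^ (q : ℕ) * bw u ^ (m - q) := by
  rw [wtASM, Fin.prod_univ_succ, ← Fin.prod_ite_lt_ite_eq q]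
  simp only [Fin.val_zero, Fin.val_succ, Nat.add_one_ne_zero, if_true, if_false, sub_zero,
    aw_zero, bw_zero, ite_self, Finset.prod_const_one, mul_one]
  refine Finset.prod_congr rfl fun j _ => ?_
  rcases lt_trichotomy j q with h | rfl | h
  · simp [hq, Pi.single_apply, h, h.ne, h.not_gt]
  · simp [hq]
  · simp [hq, Pi.single_apply, h, h.ne', h.not_gt]

namespace IsASM

variable {m : ℕ} {M : Matrix (Fin (m + 1)) (Fin (m + 1)) ℤ}

lemma row_zero_eq_zero_or_one (hM : IsASM M) (j : Fin (m + 1)) : M 0 j = 0 ∨ M 0 j = 1 := by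
  simpa [Fin.le_zero_iff, Finset.sum_filter] using hM.2.2.2.1 j 0

lemma exists_row_zero_eq_single (hM : IsASM M) : ∃ q, M 0 = Pi.single q 1 := by
  have hrow : ∀ j, M 0 j = if M 0 j = 1 then 1 else 0 := fun j => by
    rcases hM.row_zero_eq_zero_or_one j with h | h <;> simp [h]
  have hcard : #{j | M 0 j = 1} = 1 := by
    have := hM.2.2.1 0
    rw [Finset.sum_congr rfl fun j _ => hrow j, Finset.sum_boole] at this
    exact_mod_cast this
  obtain ⟨q, hq⟩ := Finset.card_eq_one.mp hcard
  refine ⟨q, funext fun j => ?_⟩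
  have := Finset.ext_iff.mp hq j
  simp only [Finset.mem_filter, Finset.mem_univ, true_and, Finset.mem_singleton] at this
  rw [hrow j, Pi.single_apply]
  simp [this]

lemma wtASM_eq_sum_row_zero (hM : IsASM M) (u : ℝ) :
    wtASM M (fun i => if (i : ℕ) = 0 then u else 0) (fun _ => 0)
      = ∑ q, if M 0 q = 1 then aw u ^ (q : ℕ) * bw u ^ (m - q) else 0 := by
  obtain ⟨q, hq⟩ := hM.exists_row_zero_eq_single
  rw [wtASM_of_row_zero_eq_single hq u, hq]
  simp [Pi.single_apply]

end IsASM

lemma hasOneAt_one_iff {m : ℕ} (M : Matrix (Fin (m + 1)) (Fin (m + 1)) ℤ) (q : Fin (m + 1)) :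
    HasOneAt M 1 ((q : ℕ) + 1) ↔ M 0 q = 1 := by
  constructor
  · rintro ⟨p, r, hp, hr, h⟩
    obtain rfl : p = 0 := Fin.ext (by rw [Fin.val_zero]; omega)
    obtain rfl : r = q := Fin.ext (by omega)
    exact h
  · exact fun h => ⟨0, q, by simp, rfl, h⟩

lemma Ank_succ_eq_ncard {m : ℕ} (q : Fin (m + 1)) :
    Ank (m + 1) ((q : ℕ) + 1)
      = {M : Matrix (Fin (m + 1)) (Fin (m + 1)) ℤ | IsASM M ∧ M 0 q = 1}.ncard := by
  simp only [Ank, hasOneAt_one_iff]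

/-- **First-row expansion of the partition function.** For `n ≥ 1` and real `u`,
with `x_1 = u` and all other spectral parameters `0`:
`Z_n(u,0,…,0;0,…,0) = Σ_{k=1}^n A_{n,k} a(u)^{k−1} b(u)^{n−k}`. -/
theorem first_row_expansion (n : ℕ) (hn : 1 ≤ n) (u : ℝ) :
    Zfn n (fun i => if (i : ℕ) = 0 then u else 0) (fun _ => 0)
    = ∑ k ∈ Finset.Icc 1 n, (Ank n (k : ℤ) : ℝ) * aw u ^ (k - 1) * bw u ^ (n - k) := by
  obtain ⟨m, rfl⟩ := Nat.exists_eq_add_of_le' hn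
  set F := (finite_setOf_isASM (m + 1)).toFinset
  calc Zfn (m + 1) (fun i => if (i : ℕ) = 0 then u else 0) (fun _ => 0)
      = ∑ M ∈ F, wtASM M (fun i => if (i : ℕ) = 0 then u else 0) (fun _ => 0) :=
        finsum_mem_eq_finite_toFinset_sum _ _
    _ = ∑ M ∈ F, ∑ q : Fin (m + 1), if M 0 q = 1 then aw u ^ (q : ℕ) * bw u ^ (m - q) else 0 :=
        Finset.sum_congr rfl fun M hM =>
          ((Set.Finite.mem_toFinset _).mp hM).wtASM_eq_sum_row_zero u
    _ = ∑ q : Fin (m + 1), (Ank (m + 1) ((q : ℕ) + 1) : ℝ) * (aw u ^ (q : ℕ) * bw u ^ (m - q)) := by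
        rw [Finset.sum_comm]
        refine Finset.sum_congr rfl fun q _ => ?_
        rw [Finset.sum_ite, Finset.sum_const_zero, add_zero, Finset.sum_const, nsmul_eq_mul,
          Ank_succ_eq_ncard, ← Set.ncard_coe_finset, Finset.coe_filter]
        simp [F]
    _ = _ := by
        rw [← Fin.sum_univ_add_one_eq_sum_Icc]
        simp [mul_assoc]
end
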